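/- arXiv:1803.11372 — 7 statements merged into one kernel-verified Lean document; each statement's English description precedes it below -/
import Mathlib

section
/- Let $\lambda_1, \lambda_2 < 0$ be real and $\Delta t > 0$. Then $\left|\frac{1 - \Delta t^2 \lambda_1\lambda_2}{(1-\Delta t\,\lambda_1)(1-\Delta t\,\lambda_2)}\right| \le 1$. -/
theorem stmt_1 (l1 l2 dt : ℝ) (h1 : l1 < 0) (h2 : l2 < 0) (hdt : 0 < dt) :
    |(1 - dt ^ 2 * l1 * l2) / ((1 - dt * l1) * (1 - dt * l2))| ≤ 1 := by
  have p1 : 0 < 1 - dt * l1 := by nlinarith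
  have p2 : 0 < 1 - dt * l2 := by nlinarith
  have hd : (0:ℝ) < (1 - dt * l1) * (1 - dt * l2) := mul_pos p1 p2
  have q1 : 0 < dt * -l1 := mul_pos hdt (neg_pos.mpr h1)
  have q2 : 0 < dt * -l2 := mul_pos hdt (neg_pos.mpr h2)
  rw [abs_div, abs_of_pos hd, div_le_one hd, abs_le']
  constructor <;> nlinarith [mul_pos q1 q2]
end

section
/- Let $\lambda_1, \lambda_2 < 0$ be real, $\alpha \le 1/2$, and $\Delta t > 0$. Then $\left|\frac{(1+\alpha\Delta t\,\lambda_1)(1+\alpha\Delta t\,\lambda_2)}{(1-(1-\alpha)\Delta t\,\lambda_1)(1-(1-\alpha)\Delta t\,\lambda_2)}\right| \le 1$. -/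
theorem stmt_2 (l1 l2 dt α : ℝ) (h1 : l1 < 0) (h2 : l2 < 0) (hα : α ≤ 1 / 2)
    (hdt : 0 < dt) :
    |((1 + α * dt * l1) * (1 + α * dt * l2)) /
      ((1 - (1 - α) * dt * l1) * (1 - (1 - α) * dt * l2))| ≤ 1 := by
  have hd1 : (0:ℝ) < 1 - (1 - α) * dt * l1 := by nlinarith [mul_nonneg (mul_nonneg (by linarith : (0:ℝ) ≤ 1 - α) hdt.le) (neg_nonneg.mpr h1.le), mul_nonneg (mul_nonneg (by linarith : (0:ℝ) ≤ 1 - α) hdt.le) (neg_nonneg.mpr h2.le), mul_nonneg (mul_nonneg (by linarith : (0:ℝ) ≤ 1 - 2*α) hdt.le) (neg_nonneg.mpr h1.le), mul_nonneg (mul_nonneg (by linarith : (0:ℝ) ≤ 1 - 2*α) hdt.le) (neg_nonneg.mpr h2.le), mul_pos hdt (neg_pos.mpr h1), mul_pos hdt (neg_pos.mpr h2)]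
  have hd2 : (0:ℝ) < 1 - (1 - α) * dt * l2 := by nlinarith [mul_nonneg (mul_nonneg (by linarith : (0:ℝ) ≤ 1 - α) hdt.le) (neg_nonneg.mpr h1.le), mul_nonneg (mul_nonneg (by linarith : (0:ℝ) ≤ 1 - α) hdt.le) (neg_nonneg.mpr h2.le), mul_nonneg (mul_nonneg (by linarith : (0:ℝ) ≤ 1 - 2*α) hdt.le) (neg_nonneg.mpr h1.le), mul_nonneg (mul_nonneg (by linarith : (0:ℝ) ≤ 1 - 2*α) hdt.le) (neg_nonneg.mpr h2.le), mul_pos hdt (neg_pos.mpr h1), mul_pos hdt (neg_pos.mpr h2)]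
  have a1 : |1 + α * dt * l1| ≤ 1 - (1 - α) * dt * l1 :=
    abs_le.mpr ⟨by nlinarith [mul_nonneg (mul_nonneg (by linarith : (0:ℝ) ≤ 1 - α) hdt.le) (neg_nonneg.mpr h1.le), mul_nonneg (mul_nonneg (by linarith : (0:ℝ) ≤ 1 - α) hdt.le) (neg_nonneg.mpr h2.le), mul_nonneg (mul_nonneg (by linarith : (0:ℝ) ≤ 1 - 2*α) hdt.le) (neg_nonneg.mpr h1.le), mul_nonneg (mul_nonneg (by linarith : (0:ℝ) ≤ 1 - 2*α) hdt.le) (neg_nonneg.mpr h2.le), mul_pos hdt (neg_pos.mpr h1), mul_pos hdt (neg_pos.mpr h2)], by nlinarith [mul_nonneg (mul_nonneg (by linarith : (0:ℝ) ≤ 1 - α) hdt.le) (neg_nonneg.mpr h1.le), mul_nonneg (mul_nonneg (by linarith : (0:ℝ) ≤ 1 - α) hdt.le) (neg_nonneg.mpr h2.le), mul_nonneg (mul_nonneg (by linarith : (0:ℝ) ≤ 1 - 2*α) hdt.le) (neg_nonneg.mpr h1.le), mul_nonneg (mul_nonneg (by linarith : (0:ℝ) ≤ 1 - 2*α) hdt.le)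 (neg_nonneg.mpr h2.le), mul_pos hdt (neg_pos.mpr h1), mul_pos hdt (neg_pos.mpr h2)]⟩
  have a2 : |1 + α * dt * l2| ≤ 1 - (1 - α) * dt * l2 :=
    abs_le.mpr ⟨by nlinarith [mul_nonneg (mul_nonneg (by linarith : (0:ℝ) ≤ 1 - α) hdt.le) (neg_nonneg.mpr h1.le), mul_nonneg (mul_nonneg (by linarith : (0:ℝ) ≤ 1 - α) hdt.le) (neg_nonneg.mpr h2.le), mul_nonneg (mul_nonneg (by linarith : (0:ℝ) ≤ 1 - 2*α) hdt.le) (neg_nonneg.mpr h1.le), mul_nonneg (mul_nonneg (by linarith : (0:ℝ) ≤ 1 - 2*α) hdt.le) (neg_nonneg.mpr h2.le), mul_pos hdt (neg_pos.mpr h1), mul_pos hdt (neg_pos.mpr h2)], by nlinarith [mul_nonneg (mul_nonneg (by linarith : (0:ℝ) ≤ 1 - α) hdt.le) (neg_nonneg.mpr h1.le), mul_nonneg (mul_nonneg (by linarith : (0:ℝ) ≤ 1 - α) hdt.le) (neg_nonneg.mpr h2.le), mul_nonneg (mul_nonneg (by linarith : (0:ℝ) ≤ 1 - 2*α) hdt.le)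 (neg_nonneg.mpr h1.le), mul_nonneg (mul_nonneg (by linarith : (0:ℝ) ≤ 1 - 2*α) hdt.le) (neg_nonneg.mpr h2.le), mul_pos hdt (neg_pos.mpr h1), mul_pos hdt (neg_pos.mpr h2)]⟩
  rw [abs_div, abs_mul, abs_mul, abs_of_pos hd1, abs_of_pos hd2,
    div_le_one (by positivity)]
  exact mul_le_mul a1 a2 (abs_nonneg _) hd1.le
end

section
/- There exist real numbers $\lambda_1, \lambda_2 < 0$, a coupling parameter $\alpha > 1/2$, and a time step $\Delta t > 0$ such that $\left|\frac{(1+\alpha\Delta t\,\lambda_1)(1+\alpha\Delta t\,\lambda_2)}{(1-(1-\alpha)\Delta t\,\lambda_1)(1-(1-\alpha)\Delta t\,\lambda_2)}\right| > 1$. -/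
theorem stmt_3 :
    ∃ (l1 l2 α dt : ℝ), l1 < 0 ∧ l2 < 0 ∧ 1 / 2 < α ∧ 0 < dt ∧
      1 < |((1 + α * dt * l1) * (1 + α * dt * l2)) /
        ((1 - (1 - α) * dt * l1) * (1 - (1 - α) * dt * l2))| := by
  exact ⟨-3, -3, 1, 1, by norm_num⟩
end

section
/- Let $\lambda_1, \lambda_2 < 0$ be real, $\alpha \le 0$, and $\Delta t > 0$. Then $\left|\frac{(1+\alpha\Delta t\,\lambda_1)(1+\alpha\Delta t\,\lambda_2) - \Delta t^2\lambda_1\lambda_2}{(1-(1-\alpha)\Delta t\,\lambda_1)(1-(1-\alpha)\Delta t\,\lambda_2)}\right| \le 1$. -/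
theorem stmt_4 (l1 l2 dt α : ℝ) (h1 : l1 < 0) (h2 : l2 < 0) (hα : α ≤ 0)
    (hdt : 0 < dt) :
    |((1 + α * dt * l1) * (1 + α * dt * l2) - dt ^ 2 * l1 * l2) /
      ((1 - (1 - α) * dt * l1) * (1 - (1 - α) * dt * l2))| ≤ 1 := by
  have ha : 0 < dt * (-l1) := mul_pos hdt (by linarith)
  have hb : 0 < dt * (-l2) := mul_pos hdt (by linarith)
  have hab : 0 < (dt * (-l1)) * (dt * (-l2)) := mul_pos ha hb
  have hαab : 0 ≤ (-α) * ((dt * (-l1)) * (dt * (-l2))) :=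
    mul_nonneg (by linarith) hab.le
  have hα2ab : 0 ≤ (α * α) * ((dt * (-l1)) * (dt * (-l2))) :=
    mul_nonneg (mul_self_nonneg α) hab.le
  have ha1 : (0:ℝ) < 1 - (1 - α) * dt * l1 := by
    nlinarith [mul_nonneg (by linarith : (0:ℝ) ≤ 1 - α) ha.le]
  have ha2 : (0:ℝ) < 1 - (1 - α) * dt * l2 := by
    nlinarith [mul_nonneg (by linarith : (0:ℝ) ≤ 1 - α) hb.le]
  have hD : (0:ℝ) < (1 - (1 - α) * dt * l1) * (1 - (1 - α) * dt * l2) :=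
    mul_pos ha1 ha2
  rw [abs_div, abs_of_pos hD, div_le_one hD, abs_le]
  constructor <;> nlinarith [ha, hb, hab, hαab, hα2ab]
end

section
/- Let $n \ge 1$ and let $A$ be a real $n \times n$ matrix with entries $a_{ij}$ such that for every $i$, $a_{ii} < 0$ and $\sum_{j \ne i} |a_{ij}| \le |a_{ii}|$ (diagonal dominance with negative diagonal). Write $A = L + D + U$ with $D$ diagonal, $L$ strictly lower triangular, $U$ strictly upper triangular. Then for every $\Delta t > 0$, the matrix $I - \Delta t D$ is invertible and the Jacobi IMEX update matrix $C^J = (I - \Delta t D)^{-1}(I + \Delta t L + \Delta t U)$ satisfies $\|C^J\|_\infty \le 1$, where $\|\cdot\|_\infty$ is the maximum absolute row-sum norm. -/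
open Finset

theorem stmt_7 (n : ℕ) (hn : 1 ≤ n) (A L D U : Matrix (Fin n) (Fin n) ℝ)
    (hdiag : ∀ i, A i i < 0)
    (hdom : ∀ i, ∑ j ∈ univ \ {i}, |A i j| ≤ |A i i|)
    (hL : ∀ i j, L i j = if j < i then A i j else 0)
    (hD : D = Matrix.diagonal fun i => A i i)
    (hU : ∀ i j, U i j = if i < j then A i j else 0)
    (dt : ℝ) (hdt : 0 < dt) :
    IsUnit (1 - dt • D) ∧
      ∀ i, ∑ j, |((1 - dt • D)⁻¹ * (1 + dt • L + dt • U)) i j| ≤ 1 := by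
  set d : Fin n → ℝ := fun i => 1 - dt * A i i with hd
  have hdpos : ∀ i, 0 < d i := fun i => by
    have := hdiag i
    have : dt * A i i < 0 := mul_neg_of_pos_of_neg hdt this
    simp only [hd]; linarith
  have hDd : (1 : Matrix (Fin n) (Fin n) ℝ) - dt • D = Matrix.diagonal d := by
    subst hD
    ext i j
    simp [Matrix.diagonal, Matrix.one_apply, hd]
    by_cases h : i = j <;> simp [h]
  have hunit : IsUnit ((1 : Matrix (Fin n) (Fin n) ℝ) - dt • D) := by
    rw [hDd, Matrix.isUnit_iff_isUnit_det, Matrix.det_diagonal]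
    exact isUnit_iff_ne_zero.mpr (Finset.prod_ne_zero_iff.mpr fun i _ => (hdpos i).ne')
  refine ⟨hunit, fun i => ?_⟩
  have hinv : ((1 : Matrix (Fin n) (Fin n) ℝ) - dt • D)⁻¹ = Matrix.diagonal fun i => (d i)⁻¹ := by
    rw [hDd]
    apply Matrix.inv_eq_right_inv
    rw [Matrix.diagonal_mul_diagonal]
    ext i j
    by_cases h : i = j <;>
      simp [h, Matrix.diagonal, Matrix.one_apply, mul_inv_cancel₀ (hdpos j).ne']
  -- entry formula for M
  set M : Matrix (Fin n) (Fin n) ℝ := 1 + dt • L + dt • U with hM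
  have hMentry : ∀ j, M i j = if i = j then 1 else dt * A i j := by
    intro j
    simp only [hM, Matrix.add_apply, Matrix.smul_apply, Matrix.one_apply, hL, hU, smul_eq_mul]
    rcases lt_trichotomy i j with h | h | h
    · simp [h, h.ne, h.not_gt, asymm h]
    · simp [h]
    · simp [h, h.ne', h.not_gt, asymm h]
  have hrow : ∀ j, (((1 - dt • D)⁻¹ * M) i j) = (d i)⁻¹ * M i j := by
    intro j
    rw [hinv, Matrix.diagonal_mul]
  calc ∑ j, |((1 - dt • D)⁻¹ * M) i j| = ∑ j, (d i)⁻¹ * |M i j| := by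
        refine Finset.sum_congr rfl fun j _ => ?_
        rw [hrow, abs_mul, abs_of_pos (inv_pos.mpr (hdpos i))]
    _ = (d i)⁻¹ * ∑ j, |M i j| := by rw [Finset.mul_sum]
    _ ≤ (d i)⁻¹ * d i := by
        refine mul_le_mul_of_nonneg_left ?_ (inv_pos.mpr (hdpos i)).le
        have hsplit : ∑ j, |M i j| = |M i i| + ∑ j ∈ univ \ {i}, |M i j| := by
          rw [Finset.sum_eq_add_sum_sdiff_singleton_of_mem (Finset.mem_univ i)]
        rw [hsplit]
        have h1 : |M i i| = 1 := by rw [hMentry]; simp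
        have h2 : ∑ j ∈ univ \ {i}, |M i j| = dt * ∑ j ∈ univ \ {i}, |A i j| := by
          rw [Finset.mul_sum]
          refine Finset.sum_congr rfl fun j hj => ?_
          have hji : i ≠ j := fun h => by simp [h] at hj
          rw [hMentry, if_neg hji, abs_mul, abs_of_pos hdt]
        rw [h1, h2]
        have := hdom i
        have habs : |A i i| = -(A i i) := abs_of_neg (hdiag i)
        have := mul_le_mul_of_nonneg_left this hdt.le
        simp only [hd]
        nlinarith
    _ = 1 := inv_mul_cancel₀ (hdpos i).ne'
end

section
/- Let $n \ge 1$ and let $A$ be a real $n \times n$ matrix with entries $a_{ij}$ such that for every $i$, $a_{ii} < 0$ and $\sum_{j\ne i}|a_{ij}| \le |a_{ii}|$. Write $A = L + D + U$ with $D$ diagonal, $L$ strictly lower triangular, $U$ strictly upper triangular, and let $\Delta t > 0$. If $\lambda \in \mathbb{C}$ and $x \in \mathbb{C}^n$, $x \ne 0$, satisfy $(I + \Delta t\, U)x = \lambda (I - \Delta t\, L - \Delta t\, D)x$, then $|\lambda| \le 1$. -/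
/-!
Take a row `i` on which `|xᵢ|` is maximal. In that row the equation reads
`xᵢ + Δt ∑_{j>i} aᵢⱼ xⱼ = λ ((1 - Δt aᵢᵢ) xᵢ - Δt ∑_{j<i} aᵢⱼ xⱼ)`. Bounding each `|xⱼ|` by `|xᵢ|`,
the left side has modulus at most `(1 + Δt S_U) |xᵢ|` and the bracket on the right at least
`(1 + Δt |aᵢᵢ| - Δt S_L) |xᵢ|`, where `S_L`, `S_U` are the off-diagonal absolute row sums of `L`
and `U`. Diagonal dominance `S_L + S_U ≤ |aᵢᵢ|` makes the second factor at least the first.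
-/

open Finset Matrix

theorem Matrix.norm_map_ofReal_mulVec_apply_le {m n : Type*} [Fintype n]
    (B : Matrix m n ℝ) (x : n → ℂ) (i : m) :
    ‖(B.map Complex.ofReal *ᵥ x) i‖ ≤ (∑ j, |B i j|) * ‖x‖ :=
  calc ‖(B.map Complex.ofReal *ᵥ x) i‖ = ‖∑ j, (B i j : ℂ) * x j‖ := rfl
    _ ≤ ∑ j, ‖(B i j : ℂ) * x j‖ := norm_sum_le _ _
    _ = ∑ j, |B i j| * ‖x j‖ := by simp only [norm_mul, Complex.norm_real, Real.norm_eq_abs]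
    _ ≤ ∑ j, |B i j| * ‖x‖ :=
        sum_le_sum fun j _ => mul_le_mul_of_nonneg_left (norm_le_pi_norm x j) (abs_nonneg _)
    _ = (∑ j, |B i j|) * ‖x‖ := (sum_mul ..).symm

theorem sum_abs_lower_add_sum_abs_upper_eq {ι : Type*} [Fintype ι] [LinearOrder ι]
    (A L U : Matrix ι ι ℝ)
    (hL : ∀ i j, L i j = if j < i then A i j else 0)
    (hU : ∀ i j, U i j = if i < j then A i j else 0) (i : ι) :
    ∑ j, |L i j| + ∑ j, |U i j| = ∑ j ∈ univ \ {i}, |A i j| := by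
  rw [← sum_add_distrib, sum_eq_sum_sdiff_singleton_add (mem_univ i)]
  simp only [hL, hU, lt_irrefl, if_false, abs_zero, add_zero]
  refine sum_congr rfl fun j hj => ?_
  rcases (show j ≠ i by simpa using hj).lt_or_gt with hlt | hgt
  · simp [hlt, not_lt_of_gt hlt]
  · simp [hgt, not_lt_of_gt hgt]

theorem norm_le_one_of_eq_mul_of_dominant {lam y l u : ℂ} {a dt SL SU : ℝ} (hdt : 0 ≤ dt)
    (hy : 0 < ‖y‖) (hl : ‖l‖ ≤ SL * ‖y‖) (hu : ‖u‖ ≤ SU * ‖y‖) (hdom : SL + SU ≤ -a)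
    (h : y + dt * u = lam * (y - dt * l - dt * (a * y))) :
    ‖lam‖ ≤ 1 := by
  have hSL : 0 ≤ SL := nonneg_of_mul_nonneg_left ((norm_nonneg l).trans hl) hy
  have hSU : 0 ≤ SU := nonneg_of_mul_nonneg_left ((norm_nonneg u).trans hu) hy
  have hdt_norm : ‖(dt : ℂ)‖ = dt := by rw [Complex.norm_real, Real.norm_of_nonneg hdt]
  have upper : ‖y + dt * u‖ ≤ (1 + dt * SU) * ‖y‖ :=
    calc ‖y + dt * u‖ ≤ ‖y‖ + dt * ‖u‖ := by
          simpa only [norm_mul, hdt_norm] using norm_add_le y (dt * u)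
      _ ≤ (1 + dt * SU) * ‖y‖ := by nlinarith [mul_le_mul_of_nonneg_left hu hdt]
  have lower : (1 - dt * a - dt * SL) * ‖y‖ ≤ ‖y - dt * l - dt * (a * y)‖ := by
    have hcoef : 0 ≤ 1 - dt * a := by nlinarith
    have hrw : y - dt * l - dt * (a * y) = ((1 - dt * a : ℝ) : ℂ) * y - dt * l := by
      push_cast; ring
    calc (1 - dt * a - dt * SL) * ‖y‖ ≤ (1 - dt * a) * ‖y‖ - dt * ‖l‖ := by
          nlinarith [mul_le_mul_of_nonneg_left hl hdt]
      _ = ‖((1 - dt * a : ℝ) : ℂ) * y‖ - ‖(dt : ℂ) * l‖ := by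
          rw [norm_mul, norm_mul, hdt_norm, Complex.norm_real, Real.norm_of_nonneg hcoef]
      _ ≤ ‖y - dt * l - dt * (a * y)‖ := hrw ▸ norm_sub_norm_le _ _
  have hgap : 1 + dt * SU ≤ 1 - dt * a - dt * SL := by nlinarith
  have hpos : 0 < (1 - dt * a - dt * SL) * ‖y‖ :=
    mul_pos (by linarith [mul_nonneg hdt hSU]) hy
  refine (mul_le_iff_le_one_left hpos).1 ?_
  calc ‖lam‖ * ((1 - dt * a - dt * SL) * ‖y‖)
      ≤ ‖lam‖ * ‖y - dt * l - dt * (a * y)‖ := mul_le_mul_of_nonneg_left lower (norm_nonneg _)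
    _ = ‖y + dt * u‖ := by rw [← norm_mul, h]
    _ ≤ (1 + dt * SU) * ‖y‖ := upper
    _ ≤ (1 - dt * a - dt * SL) * ‖y‖ := mul_le_mul_of_nonneg_right hgap hy.le

theorem stmt_8_general (n : ℕ) (A L D U : Matrix (Fin n) (Fin n) ℝ)
    (hdiag : ∀ i, A i i < 0)
    (hdom : ∀ i, ∑ j ∈ univ \ {i}, |A i j| ≤ |A i i|)
    (hL : ∀ i j, L i j = if j < i then A i j else 0)
    (hD : D = Matrix.diagonal fun i => A i i)
    (hU : ∀ i j, U i j = if i < j then A i j else 0)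
    (dt : ℝ) (hdt : 0 < dt)
    (lam : ℂ) (x : Fin n → ℂ) (hx : x ≠ 0)
    (heig : ((1 : Matrix (Fin n) (Fin n) ℂ) + (dt : ℂ) • U.map Complex.ofReal).mulVec x =
      lam • (((1 : Matrix (Fin n) (Fin n) ℂ) - (dt : ℂ) • L.map Complex.ofReal
        - (dt : ℂ) • D.map Complex.ofReal).mulVec x)) :
    ‖lam‖ ≤ 1 := by
  obtain ⟨k, -⟩ := Function.ne_iff.mp hx
  have : Nonempty (Fin n) := ⟨k⟩
  obtain ⟨i, hi : ‖x i‖ = ‖x‖⟩ := (IsGreatest.pi_norm x).1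
  have hrow := congrFun heig i
  simp only [add_mulVec, sub_mulVec, one_mulVec, smul_mulVec, Pi.add_apply, Pi.sub_apply,
    Pi.smul_apply, smul_eq_mul, hD, diagonal_map, Complex.ofReal_zero, mulVec_diagonal] at hrow
  have hdom_i : ∑ j, |L i j| + ∑ j, |U i j| ≤ -A i i := by
    rw [sum_abs_lower_add_sum_abs_upper_eq A L U hL hU i, ← abs_of_neg (hdiag i)]
    exact hdom i
  exact norm_le_one_of_eq_mul_of_dominant hdt.le (hi ▸ norm_pos_iff.2 hx)
    (hi ▸ norm_map_ofReal_mulVec_apply_le L x i)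
    (hi ▸ norm_map_ofReal_mulVec_apply_le U x i)
    hdom_i hrow

theorem stmt_8 (n : ℕ) (hn : 1 ≤ n) (A L D U : Matrix (Fin n) (Fin n) ℝ)
    (hdiag : ∀ i, A i i < 0)
    (hdom : ∀ i, ∑ j ∈ univ \ {i}, |A i j| ≤ |A i i|)
    (hL : ∀ i j, L i j = if j < i then A i j else 0)
    (hD : D = Matrix.diagonal fun i => A i i)
    (hU : ∀ i j, U i j = if i < j then A i j else 0)
    (dt : ℝ) (hdt : 0 < dt)
    (lam : ℂ) (x : Fin n → ℂ) (hx : x ≠ 0)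
    (heig : ((1 : Matrix (Fin n) (Fin n) ℂ) + (dt : ℂ) • U.map Complex.ofReal).mulVec x =
      lam • (((1 : Matrix (Fin n) (Fin n) ℂ) - (dt : ℂ) • L.map Complex.ofReal
        - (dt : ℂ) • D.map Complex.ofReal).mulVec x)) :
    ‖lam‖ ≤ 1 :=
  stmt_8_general n A L D U hdiag hdom hL hD hU dt hdt lam x hx heig
end

section
/- Let $\lambda_1, \lambda_2 \in \mathbb{R}$ with $\lambda_1 \ne 1/\Delta t$ and $\lambda_2 \ne 1/\Delta t$ for some $\Delta t > 0$, and let $C$ be the $2\times 2$ one-step update matrix of the first-order IMEX scheme with strong Gauss-Seidel predictor, defined by: $u^1_n = u^1_{n-1} + \Delta t\,\lambda_1(u^1_n + u^2_{n-1})$ and $u^2_n = u^2_{n-1} + \Delta t\,\lambda_2(u^1_n + u^2_n)$, so that $(u^1_n, u^2_n) = C (u^1_{n-1}, u^2_{n-1})$. Then $(1,-1)$ is an eigenvector of $C$ with eigenvalue $1$, and the other eigenvalue of $C$ is $\det C = \frac{1}{(1-\Delta t\lambda_1)(1-\Delta t\lambda_2)}$. -/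
theorem stmt_12 (l1 l2 dt : ℝ) (hdt : 0 < dt)
    (h1 : l1 ≠ 1 / dt) (h2 : l2 ≠ 1 / dt)
    (C : Matrix (Fin 2) (Fin 2) ℝ)
    (hC : ∀ v : Fin 2 → ℝ,
      (C.mulVec v) 0 = v 0 + dt * l1 * ((C.mulVec v) 0 + v 1) ∧
      (C.mulVec v) 1 = v 1 + dt * l2 * ((C.mulVec v) 0 + (C.mulVec v) 1)) :
    C.mulVec ![1, -1] = ![1, -1] ∧
      C.det = 1 / ((1 - dt * l1) * (1 - dt * l2)) ∧
      ∃ v : Fin 2 → ℝ, v ≠ 0 ∧ C.mulVec v = C.det • v := by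
  have hdt' : dt ≠ 0 := ne_of_gt hdt
  set a := dt * l1 with ha'
  set b := dt * l2 with hb'
  have ha : 1 - a ≠ 0 := by
    intro h
    apply h1
    field_simp
    nlinarith
  have hb : 1 - b ≠ 0 := by
    intro h
    apply h2
    field_simp
    nlinarith
  obtain ⟨e00, e10⟩ := hC ![1, 0]
  obtain ⟨e01, e11⟩ := hC ![0, 1]
  simp [Matrix.mulVec, dotProduct, Fin.sum_univ_two] at e00 e10 e01 e11
  have hC00 : C 0 0 = 1 / (1 - a) := by field_simp; nlinarith
  have hC01 : C 0 1 = a / (1 - a) := by field_simp; nlinarith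
  have hC10 : C 1 0 = b / ((1 - a) * (1 - b)) := by
    rw [hC00] at e10
    field_simp at e10 ⊢
    nlinarith
  have hC11 : C 1 1 = (1 - a + a * b) / ((1 - a) * (1 - b)) := by
    rw [hC01] at e11
    field_simp at e11 ⊢
    nlinarith
  have hdet : C.det = 1 / ((1 - a) * (1 - b)) := by
    rw [Matrix.det_fin_two, hC00, hC01, hC10, hC11]
    field_simp
    try ring
  refine ⟨?_, hdet, ?_⟩
  · funext i
    fin_cases i <;>
      simp [Matrix.mulVec, dotProduct, Fin.sum_univ_two, hC00, hC01, hC10, hC11] <;>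
      (try field_simp) <;> (try ring)
  · by_cases hab : a = 0 ∧ b = 0
    · refine ⟨![1, 0], ?_, ?_⟩
      · intro h
        have := congrFun h 0
        simp at this
      · funext i
        fin_cases i <;>
          simp [Matrix.mulVec, dotProduct, Fin.sum_univ_two, hC00, hC01, hC10, hC11,
            hdet, hab.1, hab.2]
    · refine ⟨![a * (1 - b), b], ?_, ?_⟩
      · intro h
        by_cases hbz : b = 0
        · have h0 := congrFun h 0
          simp [hbz] at h0
          exact hab ⟨h0, hbz⟩
        · have h1 := congrFun h 1
          simp at h1
          exact hbz h1
      · funext i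
        fin_cases i <;>
          simp [Matrix.mulVec, dotProduct, Fin.sum_univ_two, hC00, hC01, hC10, hC11,
            hdet] <;>
          (try field_simp) <;> (try ring)
end
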